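/- An FSA S is not strongly periodically detectable if and only if in its detector S_det at least one of the following holds: (5) there are a reachable state q' of S_det and x∈q' such that |q'|>1 and there is a transition sequence x→^{s1}x'→^{s2}x' in S for some s1∈(T_uo)*, s2∈(T_uo)^+, x'∈X; (6) there is a reachable transition cycle of S_det all of whose states have cardinality 2. -/

import Mathlib

/-- A finite-state automaton (FSA) `S = (X, T, X0, δ, Σ, ℓ)`:
states `X`, events `T`, outputs `O` (the alphabet Σ), initial states `init`,
transition relation `delta`, and labeling function `label` where `none` encodes ε. -/
structure FSA (X T O : Type) where
  init : Set X
  delta : X → T → X → Prop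
  label : T → Option O

/-- Composed events of the (ε-extended) self-composition: pairs of observable
events with the same label, unobservable events on the left/right component,
and the added ε event. -/
inductive CEvent (T : Type) where
  | both : T → T → CEvent T
  | left : T → CEvent T
  | right : T → CEvent T
  | eps : CEvent T

namespace FSA

variable {X T O : Type}

/-- Extension of `delta` to finite event sequences: `x →^s x'`. -/
def Run (M : FSA X T O) : X → List T → X → Prop
  | x, [], x' => x = x'
  | x, t :: s, x' => ∃ y, M.delta x t y ∧ Run M y s x'

/-- The label sequence `ℓ(s)` of a finite event sequence. -/
def labelSeq (M : FSA X T O) (s : List T) : List O :=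
  s.filterMap M.label

/-- Membership in `L^ω(S)`: infinite event sequences generated from some initial state. -/
def InLomega (M : FSA X T O) (s : ℕ → T) : Prop :=
  ∃ x : ℕ → X, x 0 ∈ M.init ∧ ∀ i, M.delta (x i) (s i) (x (i + 1))

/-- `s'` is a finite prefix of the infinite sequence `s`. -/
def IsPrefixOf (s' : List T) (s : ℕ → T) : Prop :=
  ∀ i : Fin s'.length, s'.get i = s i

/-- The current-state estimate `M(S,σ)`. -/
def est (M : FSA X T O) (σ : List O) : Set X :=
  {x | ∃ x0 ∈ M.init, ∃ s : List T, M.labelSeq s = σ ∧ M.Run x0 s x}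

/-- Strong periodic detectability (SPD). -/
def SPD (M : FSA X T O) : Prop :=
  ∃ k : ℕ, 0 < k ∧ ∀ s : ℕ → T, M.InLomega s → ∀ s' : List T, IsPrefixOf s' s →
    ∃ s'' : List T, (M.labelSeq s'').length < k ∧ IsPrefixOf (s' ++ s'') s ∧
      (M.est (M.labelSeq (s' ++ s''))).ncard = 1

/-- Strong periodic D-detectability with respect to `Tspec`. -/
def SPDD (M : FSA X T O) (Tspec : Set (X × X)) : Prop :=
  ∃ k : ℕ, 0 < k ∧ ∀ s : ℕ → T, M.InLomega s → ∀ s' : List T, IsPrefixOf s' s →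
    ∃ s'' : List T, (M.labelSeq s'').length < k ∧ IsPrefixOf (s' ++ s'') s ∧
      (M.est (M.labelSeq (s' ++ s'')) ×ˢ M.est (M.labelSeq (s' ++ s''))) ∩ Tspec = ∅

/-- An unobservable transition sequence `x →^s x'` (all events labeled ε). -/
def UnobsRun (M : FSA X T O) (x : X) (s : List T) (x' : X) : Prop :=
  M.Run x s x' ∧ ∀ t ∈ s, M.label t = none

/-- Unobservable reach `UR` of a set of states. -/
def UR (M : FSA X T O) (q : Set X) : Set X :=
  {x' | ∃ x ∈ q, ∃ s : List T, M.UnobsRun x s x'}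

/-- Observable reach `Reach_σ` of a set of states. -/
def ReachO (M : FSA X T O) (σ : O) (q : Set X) : Set X :=
  {x' | ∃ x ∈ q, ∃ t : T, M.delta x t x' ∧ M.label t = some σ}

/-- Initial state `M(S,ε) = UR(X0)` of the observer/detector. -/
def obsInit (M : FSA X T O) : Set X := M.UR M.init

/-- Observer transition `δ_obs(q,σ) = UR(Reach_σ(q))` (defined when nonempty). -/
def obsTrans (M : FSA X T O) (q : Set X) (σ : O) (q' : Set X) : Prop :=
  q' = M.UR (M.ReachO σ q) ∧ q'.Nonempty

/-- Sequences of observer transitions. -/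
def ObsRun (M : FSA X T O) : Set X → List O → Set X → Prop
  | q, [], q' => q = q'
  | q, σ :: w, q' => ∃ q1, M.obsTrans q σ q1 ∧ ObsRun M q1 w q'

/-- Reachable states of the observer `S_obs`. -/
def ObsReachable (M : FSA X T O) (q : Set X) : Prop :=
  ∃ w : List O, M.ObsRun M.obsInit w q

/-- Detector transition relation `δ_det`. -/
def detTrans (M : FSA X T O) (q : Set X) (σ : O) (q' : Set X) : Prop :=
  (1 < (M.UR (M.ReachO σ q)).ncard ∧ q' ⊆ M.UR (M.ReachO σ q) ∧ q'.ncard = 2) ∨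
  ((M.UR (M.ReachO σ q)).ncard = 1 ∧ q' = M.UR (M.ReachO σ q))

/-- Sequences of detector transitions. -/
def DetRun (M : FSA X T O) : Set X → List O → Set X → Prop
  | q, [], q' => q = q'
  | q, σ :: w, q' => ∃ q1, M.detTrans q σ q1 ∧ DetRun M q1 w q'

/-- Reachable states of the detector `S_det`. -/
def DetReachable (M : FSA X T O) (q : Set X) : Prop :=
  ∃ w : List O, M.DetRun M.obsInit w q

/-- The label of a composed event. -/
def cLabel (M : FSA X T O) : CEvent T → Option O
  | CEvent.both t _ => M.label t
  | CEvent.left _ => none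
  | CEvent.right _ => none
  | CEvent.eps => none

/-- The label sequence of a sequence of composed events. -/
def ccLabelSeq (M : FSA X T O) (s : List (CEvent T)) : List O :=
  s.filterMap M.cLabel

/-- Transition relation `δ'` of the self-composition `CC_A(S)`. -/
def ccTrans (M : FSA X T O) : X × X → CEvent T → X × X → Prop
  | p, CEvent.both t t', p' =>
      M.delta p.1 t p'.1 ∧ M.delta p.2 t' p'.2 ∧
      ∃ σ : O, M.label t = some σ ∧ M.label t' = some σ
  | p, CEvent.left t, p' => M.delta p.1 t p'.1 ∧ M.label t = none ∧ p.2 = p'.2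
  | p, CEvent.right t, p' => p.1 = p'.1 ∧ M.label t = none ∧ M.delta p.2 t p'.2
  | _, CEvent.eps, _ => False

/-- Transition relation of the ε-extended self-composition `CC^ε_A(S)`:
all transitions of `CC_A(S)` plus, for `x1 ≠ x2`, the added ε-transitions
`((x1,x2),ε,(x1,x1))` and `((x1,x2),ε,(x2,x2))` under the stated conditions. -/
def ccEpsTrans (M : FSA X T O) (p : X × X) (e : CEvent T) (p' : X × X) : Prop :=
  M.ccTrans p e p' ∨
  (e = CEvent.eps ∧ p.1 ≠ p.2 ∧ (p' = (p.1, p.1) ∨ p' = (p.2, p.2)) ∧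
    ∃ (t' : CEvent T) (r : X × X),
      M.ccTrans p' t' r ∧ ∀ t'' : CEvent T, ¬ M.ccTrans p t'' r)

/-- Sequences of transitions of `CC^ε_A(S)`. -/
def CCRun (M : FSA X T O) : X × X → List (CEvent T) → X × X → Prop
  | p, [], p' => p = p'
  | p, e :: s, p' => ∃ r, M.ccEpsTrans p e r ∧ CCRun M r s p'

/-- Reachable states of `CC^ε_A(S)` (from `X0 × X0`). -/
def CCReachable (M : FSA X T O) (p : X × X) : Prop :=
  ∃ p0 : X × X, p0.1 ∈ M.init ∧ p0.2 ∈ M.init ∧ ∃ s : List (CEvent T), M.CCRun p0 s p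

/-- A state is reachable in `S`. -/
def StateReachable (M : FSA X T O) (x : X) : Prop :=
  ∃ x0 ∈ M.init, ∃ s : List T, M.Run x0 s x

/-- Deadlock-freeness. -/
def DeadlockFree (M : FSA X T O) : Prop :=
  ∀ x : X, M.StateReachable x → ∃ (t : T) (x' : X), M.delta x t x'

/-- Divergence-freeness (promptness): no reachable unobservable transition cycle. -/
def DivergenceFree (M : FSA X T O) : Prop :=
  ∀ x : X, M.StateReachable x → ∀ s : List T, s ≠ [] →
    (∀ t ∈ s, M.label t = none) → ¬ M.Run x s x

end FSA

/-!
A detector state reached along an observation `w` is a subset of the current-state estimate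
`est w`; conversely every one- or two-element subset of `est w` lies in a reachable detector state
inside `est w`, because two states of `est (σ ++ [a])` have at most two predecessors in `est σ`.

Each condition yields a lasso `u v^ω` of `S` along which the estimate never becomes a singleton
after `u`. For (5) the loop `v` is unobservable. For (6), every state of the two-element cycle state
`q₀` has a predecessor in `q₀` along the cycle word; a periodic point of this predecessor map
carries a loop of `S` whose observation runs around the detector cycle.

Conversely, take a run refuting strong periodic detectability with `k = 2^|X| + 3`. If only
finitely many observations follow the prefix, the estimate stays non-singleton while an
unobservable tail revisits a state. Otherwise, choosing two-element subsets of the estimates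
backwards along the next `2^|X| + 2` observations gives a detector path through pair states that
must repeat a state.
-/

theorem Finite.exists_rel_self_of_forall_exists_rel {α : Type*} [Finite α] [Nonempty α]
    (R : α → α → Prop) [IsTrans α R] (h : ∀ y, ∃ z, R z y) : ∃ x, R x x := by
  choose f hf using h
  obtain ⟨x⟩ := ‹Nonempty α›
  obtain ⟨i, j, hij, heq⟩ := Finite.exists_ne_map_eq_of_infinite fun n : ℕ => f^[n] x
  wlog hlt : i < j generalizing i j
  · exact this j i hij.symm heq.symm (by omega)
  have hiter : ∀ m z, R (f^[m + 1] z) z := by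
    intro m
    induction m with
    | zero => exact hf
    | succ m ih =>
      intro z
      rw [Function.iterate_succ_apply]
      exact _root_.trans (ih (f z)) (hf z)
  obtain ⟨m, rfl⟩ : ∃ m, j = m + 1 + i := ⟨j - i - 1, by omega⟩
  refine ⟨f^[i] x, ?_⟩
  have := hiter m (f^[i] x)
  rwa [← Function.iterate_add_apply, ← heq] at this

theorem Stream'.take_cycle_induction {α : Type*} {v : List α} (hv : v ≠ []) {P : List α → Prop}
    (htake : ∀ n ≤ v.length, P (v.take n)) (happend : ∀ u, P u → P (v ++ u)) (n : ℕ) :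
    P (Stream'.take n (Stream'.cycle v hv)) := by
  induction n using Nat.strong_induction_on with
  | _ n ih =>
    rcases le_or_gt n v.length with hn | hn
    · rw [Stream'.cycle_eq, Stream'.take_append_of_le_length _ _ _ hn]
      exact htake n hn
    · obtain ⟨m, rfl⟩ : ∃ m, n = v.length + m := ⟨n - v.length, by omega⟩
      rw [Stream'.cycle_eq, ← Stream'.append_take]
      exact happend _ (ih m (by have := List.length_pos_iff.2 hv; omega))

namespace FSA

variable {X T O : Type} (M : FSA X T O)

theorem run_append {x y : X} {u v : List T} :
    M.Run x (u ++ v) y ↔ ∃ z, M.Run x u z ∧ M.Run z v y := by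
  induction u generalizing x with
  | nil => simp [Run]
  | cons t u ih =>
    simp only [List.cons_append, Run, ih]
    exact ⟨fun ⟨w, hw, z, h₁, h₂⟩ => ⟨z, ⟨w, hw, h₁⟩, h₂⟩,
      fun ⟨z, ⟨w, hw, h₁⟩, h₂⟩ => ⟨w, hw, z, h₁, h₂⟩⟩

theorem labelSeq_append (u v : List T) : M.labelSeq (u ++ v) = M.labelSeq u ++ M.labelSeq v :=
  List.filterMap_append

theorem unobsRun_iff {x y : X} {u : List T} :
    M.UnobsRun x u y ↔ M.Run x u y ∧ M.labelSeq u = [] := by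
  rw [UnobsRun, labelSeq, List.filterMap_eq_nil_iff]

theorem mem_est_append {σ : List O} {x y : X} {p : List T} (hx : x ∈ M.est σ)
    (hp : M.Run x p y) : y ∈ M.est (σ ++ M.labelSeq p) := by
  obtain ⟨x₀, hx₀, u, rfl, hu⟩ := hx
  exact ⟨x₀, hx₀, u ++ p, M.labelSeq_append u p, M.run_append.2 ⟨x, hu, hp⟩⟩

theorem est_nil : M.est [] = M.obsInit := by
  ext x
  simp only [est, obsInit, UR, unobsRun_iff, Set.mem_ofPred_eq]
  exact ⟨fun ⟨x₀, hx₀, u, hu, hrun⟩ => ⟨x₀, hx₀, u, hrun, hu⟩,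
    fun ⟨x₀, hx₀, u, hrun, hu⟩ => ⟨x₀, hx₀, u, hu, hrun⟩⟩

theorem exists_run_of_mem_UR_ReachO {a : O} {q : Set X} {y : X}
    (hy : y ∈ M.UR (M.ReachO a q)) : ∃ z ∈ q, ∃ p, M.Run z p y ∧ M.labelSeq p = [a] := by
  obtain ⟨z₁, ⟨z, hz, t, ht, hta⟩, p, hp⟩ := hy
  rw [unobsRun_iff] at hp
  refine ⟨z, hz, t :: p, ⟨z₁, ht, hp.1⟩, ?_⟩
  simpa [labelSeq, hta] using hp.2

theorem est_append_singleton (σ : List O) (a : O) :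
    M.est (σ ++ [a]) = M.UR (M.ReachO a (M.est σ)) := by
  ext y
  constructor
  · rintro ⟨x₀, hx₀, u, hu, hrun⟩
    obtain ⟨u₁, u₂, rfl, hu₁, hu₂⟩ := List.filterMap_eq_append_iff.1 hu
    obtain ⟨l, t, r, rfl, hl, ht, hr⟩ := List.filterMap_eq_cons_iff.1 hu₂
    rw [← List.append_assoc, M.run_append] at hrun
    obtain ⟨z, hz, z', hzz', hz'y⟩ := hrun
    refine ⟨z', ⟨z, ⟨x₀, hx₀, u₁ ++ l, ?_, hz⟩, t, hzz', ht⟩, r, hz'y,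
      List.filterMap_eq_nil_iff.1 hr⟩
    rw [labelSeq_append, labelSeq, hu₁, labelSeq, List.filterMap_eq_nil_iff.2 hl,
      List.append_nil]
  · intro hy
    obtain ⟨z, hz, p, hp, hpa⟩ := M.exists_run_of_mem_UR_ReachO hy
    simpa [hpa] using M.mem_est_append hz hp

theorem UR_mono {p q : Set X} (h : p ⊆ q) : M.UR p ⊆ M.UR q := by
  rintro x ⟨y, hy, u, hu⟩
  exact ⟨y, h hy, u, hu⟩

theorem ReachO_mono (a : O) {p q : Set X} (h : p ⊆ q) : M.ReachO a p ⊆ M.ReachO a q := by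
  rintro x ⟨y, hy, t, ht⟩
  exact ⟨y, h hy, t, ht⟩

theorem exists_subset_ncard_le_of_subset_UR_ReachO [Finite X] {a : O} {P Q : Set X}
    (h : P ⊆ M.UR (M.ReachO a Q)) :
    ∃ P₀ ⊆ Q, P₀.ncard ≤ P.ncard ∧ P ⊆ M.UR (M.ReachO a P₀) := by
  have hpred : ∀ y ∈ P, ∃ z ∈ Q, y ∈ M.UR (M.ReachO a {z}) := by
    intro y hy
    obtain ⟨x, ⟨z, hz, t, ht⟩, u, hu⟩ := h hy
    exact ⟨z, hz, x, ⟨z, rfl, t, ht⟩, u, hu⟩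
  choose! f hfQ hf using hpred
  refine ⟨f '' P, Set.image_subset_iff.2 hfQ, Set.ncard_image_le, fun y hy => ?_⟩
  exact M.UR_mono (M.ReachO_mono a (Set.singleton_subset_iff.2 (Set.mem_image_of_mem f hy)))
    (hf y hy)

theorem subset_of_detTrans {q q' : Set X} {a : O} (h : M.detTrans q a q') :
    q' ⊆ M.UR (M.ReachO a q) := by
  rcases h with ⟨-, h, -⟩ | ⟨-, rfl⟩
  exacts [h, subset_rfl]

theorem detTrans_of_subset [Finite X] {q q' : Set X} {a : O} (h : q' ⊆ M.UR (M.ReachO a q))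
    (h₂ : q'.ncard = 2) : M.detTrans q a q' :=
  Or.inl ⟨by have := Set.ncard_le_ncard h; omega, h, h₂⟩

theorem detRun_append {q q'' : Set X} {w₁ w₂ : List O} :
    M.DetRun q (w₁ ++ w₂) q'' ↔ ∃ q', M.DetRun q w₁ q' ∧ M.DetRun q' w₂ q'' := by
  induction w₁ generalizing q with
  | nil => simp [DetRun]
  | cons a w ih =>
    simp only [List.cons_append, DetRun, ih]
    exact ⟨fun ⟨r, hr, q', h₁, h₂⟩ => ⟨q', ⟨r, hr, h₁⟩, h₂⟩,
      fun ⟨q', ⟨r, hr, h₁⟩, h₂⟩ => ⟨r, hr, q', h₁, h₂⟩⟩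

theorem DetReachable.detTrans {M : FSA X T O} {q q' : Set X} {a : O} (h : M.DetReachable q)
    (ha : M.detTrans q a q') : M.DetReachable q' := by
  obtain ⟨w, hw⟩ := h
  exact ⟨w ++ [a], M.detRun_append.2 ⟨q, hw, q', ha, rfl⟩⟩

theorem exists_run_of_detRun {q q' : Set X} {w : List O} (h : M.DetRun q w q') {y : X}
    (hy : y ∈ q') : ∃ z ∈ q, ∃ p, M.Run z p y ∧ M.labelSeq p = w := by
  induction w generalizing q with
  | nil => exact ⟨y, (h : q = q') ▸ hy, [], rfl, rfl⟩
  | cons a w ih =>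
    obtain ⟨q₁, ha, hw⟩ := h
    obtain ⟨z₁, hz₁, p₁, hp₁, rfl⟩ := ih hw
    obtain ⟨z, hz, p, hp, hpa⟩ := M.exists_run_of_mem_UR_ReachO (M.subset_of_detTrans ha hz₁)
    exact ⟨z, hz, p ++ p₁, M.run_append.2 ⟨z₁, hp, hp₁⟩, by rw [labelSeq_append, hpa]; rfl⟩

theorem subset_est_of_detRun {q : Set X} {w : List O} (h : M.DetRun M.obsInit w q) :
    q ⊆ M.est w := by
  intro y hy
  obtain ⟨z, hz, p, hp, rfl⟩ := M.exists_run_of_detRun h hy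
  rw [← est_nil] at hz
  simpa using M.mem_est_append hz hp

theorem exists_detReachable_of_subset_est [Finite X] {σ : List O} {P : Set X}
    (hne : P.Nonempty) (hP : P ⊆ M.est σ) (h₂ : P.ncard ≤ 2) :
    ∃ q, M.DetReachable q ∧ P ⊆ q ∧ q ⊆ M.est σ := by
  induction σ using List.reverseRecOn generalizing P with
  | nil =>
    rw [est_nil] at hP ⊢
    exact ⟨M.obsInit, ⟨[], rfl⟩, hP, subset_rfl⟩
  | append_singleton σ a ih =>
    rw [est_append_singleton] at hP ⊢
    obtain ⟨P₀, hP₀, hcard, hPP₀⟩ := M.exists_subset_ncard_le_of_subset_UR_ReachO hP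
    obtain ⟨_, ⟨z, hz, -⟩, -⟩ := hPP₀ hne.some_mem
    obtain ⟨q₀, hq₀, hP₀q₀, hq₀σ⟩ := ih ⟨z, hz⟩ hP₀ (hcard.trans h₂)
    set R := M.UR (M.ReachO a q₀)
    have hPR : P ⊆ R := hPP₀.trans (M.UR_mono (M.ReachO_mono a hP₀q₀))
    have hRσ : R ⊆ M.UR (M.ReachO a (M.est σ)) := M.UR_mono (M.ReachO_mono a hq₀σ)
    by_cases hR : R.ncard = 1
    · exact ⟨R, hq₀.detTrans (Or.inr ⟨hR, rfl⟩), hPR, hRσ⟩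
    · have : 2 ≤ R.ncard := by
        have := (Set.ncard_pos).2 (hne.mono hPR)
        omega
      obtain ⟨Q, hPQ, hQR, hQ⟩ := Set.exists_subsuperset_card_eq hPR h₂ this
      exact ⟨Q, hq₀.detTrans (M.detTrans_of_subset hQR hQ), hPQ, hQR.trans hRσ⟩

theorem detReachable_of_subset_est_append [Finite X] {σ : List O} {a : O} {P : Set X}
    (hP : P ⊆ M.est (σ ++ [a])) (h₂ : P.ncard = 2) : M.DetReachable P := by
  rw [est_append_singleton] at hP
  obtain ⟨P₀, hP₀, hcard, hPP₀⟩ := M.exists_subset_ncard_le_of_subset_UR_ReachO hP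
  have hne : P.Nonempty := Set.nonempty_of_ncard_ne_zero (by omega)
  obtain ⟨_, ⟨z, hz, -⟩, -⟩ := hPP₀ hne.some_mem
  obtain ⟨q₀, hq₀, hP₀q₀, -⟩ :=
    M.exists_detReachable_of_subset_est ⟨z, hz⟩ hP₀ (hcard.trans h₂.le)
  exact hq₀.detTrans (M.detTrans_of_subset (hPP₀.trans (M.UR_mono (M.ReachO_mono a hP₀q₀))) h₂)

theorem exists_detTrans_of_subset_est [Finite X] {σ : List O} {a : O} {Q' : Set X}
    (hσ : 1 < (M.est σ).ncard) (hQ' : Q' ⊆ M.est (σ ++ [a])) (h₂ : Q'.ncard = 2) :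
    ∃ Q ⊆ M.est σ, Q.ncard = 2 ∧ M.detTrans Q a Q' := by
  rw [est_append_singleton] at hQ'
  obtain ⟨P₀, hP₀, hcard, hQ'P₀⟩ := M.exists_subset_ncard_le_of_subset_UR_ReachO hQ'
  obtain ⟨Q, hP₀Q, hQσ, hQ⟩ := Set.exists_subsuperset_card_eq hP₀ (hcard.trans h₂.le) hσ
  exact ⟨Q, hQσ, hQ, M.detTrans_of_subset (hQ'P₀.trans (M.UR_mono (M.ReachO_mono a hP₀Q))) h₂⟩

theorem exists_pair_chain [Finite X] (σ w : List O)
    (h : ∀ j ≤ w.length, 1 < (M.est (σ ++ w.take j)).ncard) :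
    ∃ Q : ℕ → Set X, (∀ j ≤ w.length, Q j ⊆ M.est (σ ++ w.take j) ∧ (Q j).ncard = 2) ∧
      ∀ j (hj : j < w.length), M.detTrans (Q j) w[j] (Q (j + 1)) := by
  induction w generalizing σ with
  | nil =>
    obtain ⟨Q, hQ, hQ₂⟩ := Set.exists_subset_card_eq (h 0 le_rfl)
    exact ⟨fun _ => Q, fun j hj => ⟨by simpa using hQ, hQ₂⟩, by simp⟩
  | cons a w ih =>
    obtain ⟨Q', hQ', htr'⟩ := ih (σ ++ [a]) fun j hj => by
      simpa using h (j + 1) (by simpa using hj)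
    obtain ⟨Q₀, hQ₀, hQ₀₂, htr₀⟩ := M.exists_detTrans_of_subset_est (by simpa using h 0 (by simp))
      (by simpa using (hQ' 0 (by simp)).1) (hQ' 0 (by simp)).2
    refine ⟨fun | 0 => Q₀ | j + 1 => Q' j, ?_, ?_⟩
    · rintro (_ | j) hj
      · simpa using ⟨hQ₀, hQ₀₂⟩
      · simpa using hQ' j (by simpa using hj)
    · rintro (_ | j) hj
      · exact htr₀
      · exact htr' j (by simpa using hj)

def HasDivergentDetState : Prop :=
  ∃ q' : Set X, M.DetReachable q' ∧ 1 < q'.ncard ∧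
    ∃ x ∈ q', ∃ (x' : X) (s1 s2 : List T),
      M.UnobsRun x s1 x' ∧ s2 ≠ [] ∧ M.UnobsRun x' s2 x'

def HasDetPairCycle : Prop :=
  ∃ (n : ℕ), 0 < n ∧ ∃ (q : Fin (n + 1) → Set X) (σ : Fin n → O),
    M.DetReachable (q 0) ∧ q 0 = q (Fin.last n) ∧
    (∀ i : Fin n, M.detTrans (q i.castSucc) (σ i) (q i.succ)) ∧
    ∀ i : Fin (n + 1), (q i).ncard = 2

theorem hasDetPairCycle_of_chain [Finite X] (Q : ℕ → Set X) (w : List O)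
    (hw : Nat.card (Set X) ≤ w.length) (h₀ : M.DetReachable (Q 0))
    (htr : ∀ j (hj : j < w.length), M.detTrans (Q j) w[j] (Q (j + 1)))
    (hQ : ∀ j ≤ w.length, (Q j).ncard = 2) : M.HasDetPairCycle := by
  have : Fintype (Set X) := Fintype.ofFinite _
  obtain ⟨i, j, hij, heq⟩ := Fintype.exists_ne_map_eq_of_card_lt
    (fun j : Fin (w.length + 1) => Q j)
    (by rw [Fintype.card_fin, ← Nat.card_eq_fintype_card]; omega)
  wlog hlt : i < j generalizing i j
  · exact this j i hij.symm heq.symm (lt_of_le_of_ne (not_lt.1 hlt) hij.symm)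
  have hreach : ∀ k ≤ w.length, M.DetReachable (Q k) := by
    intro k
    induction k with
    | zero => exact fun _ => h₀
    | succ k ih => exact fun hk => (ih (by omega)).detTrans (htr k (by omega))
  obtain ⟨n, hn⟩ : ∃ n, (j : ℕ) = i + (n + 1) := ⟨j - i - 1, by omega⟩
  have hj := j.isLt
  refine ⟨n + 1, n.succ_pos, fun r => Q (i + r), fun r => w[(i : ℕ) + r]'(by omega),
    ?_, ?_, ?_, ?_⟩
  · simpa using hreach i (by omega)
  · simpa [← hn] using heq
  · intro r
    simpa [add_assoc] using htr (i + r) (by omega)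
  · intro r
    exact hQ _ (by omega)

theorem hasDetPairCycle_of_one_lt_ncard_est [Finite X] {σ w : List O} {a : O}
    (hw : Nat.card (Set X) ≤ w.length)
    (h : ∀ j ≤ w.length, 1 < (M.est (σ ++ [a] ++ w.take j)).ncard) : M.HasDetPairCycle := by
  obtain ⟨Q, hQ, htr⟩ := M.exists_pair_chain _ w h
  have hQ₀ := hQ 0 (Nat.zero_le _)
  exact M.hasDetPairCycle_of_chain Q w hw
    (M.detReachable_of_subset_est_append (by simpa using hQ₀.1) hQ₀.2) htr fun j hj => (hQ j hj).2

def PairRun : Set X → List O → Set X → Prop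
  | q, [], q' => q = q' ∧ q.ncard = 2
  | q, a :: w, q' => q.ncard = 2 ∧ ∃ q₁, M.detTrans q a q₁ ∧ PairRun q₁ w q'

theorem PairRun.ncard_left {M : FSA X T O} {q q' : Set X} {w : List O}
    (h : M.PairRun q w q') : q.ncard = 2 := by
  cases w with
  | nil => exact h.2
  | cons => exact h.1

theorem PairRun.detRun {M : FSA X T O} {q q' : Set X} {w : List O}
    (h : M.PairRun q w q') : M.DetRun q w q' := by
  induction w generalizing q with
  | nil => exact h.1
  | cons a w ih =>
    obtain ⟨-, q₁, ha, hw⟩ := h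
    exact ⟨q₁, ha, ih hw⟩

theorem PairRun.ncard_right {M : FSA X T O} {q q' : Set X} {w : List O}
    (h : M.PairRun q w q') : q'.ncard = 2 := by
  induction w generalizing q with
  | nil => exact h.1 ▸ h.2
  | cons a w ih =>
    obtain ⟨-, q₁, -, hw⟩ := h
    exact ih hw

theorem pairRun_append {q q'' : Set X} {w₁ w₂ : List O} :
    M.PairRun q (w₁ ++ w₂) q'' ↔ ∃ q', M.PairRun q w₁ q' ∧ M.PairRun q' w₂ q'' := by
  induction w₁ generalizing q with
  | nil =>
    simp only [List.nil_append, PairRun]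
    exact ⟨fun h => ⟨q, ⟨rfl, h.ncard_left⟩, h⟩, fun ⟨_, ⟨rfl, _⟩, h⟩ => h⟩
  | cons a w ih =>
    simp only [List.cons_append, PairRun, ih]
    exact ⟨fun ⟨hq, r, hr, q', h₁, h₂⟩ => ⟨q', ⟨hq, r, hr, h₁⟩, h₂⟩,
      fun ⟨q', ⟨hq, r, hr, h₁⟩, h₂⟩ => ⟨hq, r, hr, q', h₁, h₂⟩⟩

theorem PairRun.exists_of_prefix {M : FSA X T O} {q q'' : Set X} {w w' : List O}
    (h : M.PairRun q w q'') (hw' : w' <+: w) : ∃ q', M.PairRun q w' q' := by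
  obtain ⟨r, rfl⟩ := hw'
  obtain ⟨q', h', -⟩ := M.pairRun_append.1 h
  exact ⟨q', h'⟩

theorem pairRun_ofFn {n : ℕ} (q : Fin (n + 1) → Set X) (σ : Fin n → O)
    (htr : ∀ i : Fin n, M.detTrans (q i.castSucc) (σ i) (q i.succ))
    (hq : ∀ i, (q i).ncard = 2) : M.PairRun (q 0) (List.ofFn σ) (q (Fin.last n)) := by
  induction n with
  | zero => exact ⟨rfl, hq 0⟩
  | succ n ih =>
    rw [List.ofFn_succ, ← Fin.succ_last]
    refine ⟨hq 0, q 1, htr 0, ?_⟩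
    exact ih (fun i => q i.succ) (fun i => σ i.succ) (fun i => by simpa using htr i.succ)
      (fun i => hq i.succ)

theorem exists_loop_of_pairRun [Finite X] {q : Set X} {w : List O} (hw : M.PairRun q w q)
    (hw₀ : w ≠ []) : ∃ y ∈ q, ∃ p, p ≠ [] ∧ M.Run y p y ∧ M.PairRun q (M.labelSeq p) q := by
  let R : q → q → Prop := fun z y => ∃ p, p ≠ [] ∧ M.Run z p y ∧ M.PairRun q (M.labelSeq p) q
  have : IsTrans q R := ⟨fun a b c ⟨p, hp, hab, hpq⟩ ⟨p', _, hbc, hp'q⟩ =>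
    ⟨p ++ p', by simp [hp], M.run_append.2 ⟨b, hab, hbc⟩,
      by rw [labelSeq_append]; exact M.pairRun_append.2 ⟨q, hpq, hp'q⟩⟩⟩
  have : Nonempty q :=
    (Set.nonempty_of_ncard_ne_zero (by rw [hw.ncard_left]; omega)).to_subtype
  obtain ⟨⟨y, hy⟩, hyy⟩ := Finite.exists_rel_self_of_forall_exists_rel R fun ⟨y, hy⟩ => by
    obtain ⟨z, hz, p, hp, rfl⟩ := M.exists_run_of_detRun hw.detRun hy
    exact ⟨⟨z, hz⟩, p, by rintro rfl; exact hw₀ rfl, hp, hw⟩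
  exact ⟨y, hy, hyy⟩

theorem isPrefixOf_iff {u : List T} {s : Stream' T} :
    IsPrefixOf u s ↔ s.take u.length = u := by
  constructor
  · intro h
    refine List.ext_getElem (by simp) fun i h₁ h₂ => ?_
    rw [Stream'.take_get]
    exact (h ⟨i, h₂⟩).symm
  · intro h i
    exact (List.getElem_of_eq h.symm i.isLt).trans (Stream'.take_get _ _ _ _)

theorem run_take_drop {s : Stream' T} {xs : ℕ → X}
    (h : ∀ i, M.delta (xs i) (s.get i) (xs (i + 1))) (a n : ℕ) :
    M.Run (xs a) ((s.drop a).take n) (xs (a + n)) := by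
  induction n with
  | zero => rfl
  | succ n ih =>
    rw [Stream'.take_succ', M.run_append]
    exact ⟨_, ih, _, by simpa [Stream'.get_drop, ← add_assoc] using h (a + n), rfl⟩

theorem mem_est_take {s : Stream' T} {xs : ℕ → X} (h₀ : xs 0 ∈ M.init)
    (h : ∀ i, M.delta (xs i) (s.get i) (xs (i + 1))) (n : ℕ) :
    xs n ∈ M.est (M.labelSeq (s.take n)) :=
  ⟨xs 0, h₀, _, rfl, by simpa using M.run_take_drop h 0 n⟩

theorem inLomega_of_invariant (R : X → Stream' T → Prop)
    (hR : ∀ x s, R x s → ∃ y, M.delta x s.head y ∧ R y s.tail) {x₀ : X} {s : Stream' T}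
    (hx₀ : x₀ ∈ M.init) (h : R x₀ s) : M.InLomega s := by
  choose! f hf hRf using hR
  let xs : ℕ → X := fun i => Nat.rec x₀ (fun i x => f x (s.drop i)) i
  have hxs : ∀ i, R (xs i) (s.drop i) := by
    intro i
    induction i with
    | zero => exact h
    | succ i ih => simpa [Stream'.tail_drop] using hRf _ _ ih
  refine ⟨xs, hx₀, fun i => ?_⟩
  have := hf _ _ (hxs i)
  rwa [Stream'.head_drop] at this

theorem not_spd_of_lasso {x₀ y : X} {u v : List T} (hx₀ : x₀ ∈ M.init) (hu : M.Run x₀ u y)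
    (hv : M.Run y v y) (hv₀ : v ≠ [])
    (hest : ∀ n, (M.est (M.labelSeq (u ++ Stream'.take n (Stream'.cycle v hv₀)))).ncard ≠ 1) :
    ¬ M.SPD := by
  rintro ⟨k, -, hk⟩
  have hs : M.InLomega (u ++ₛ Stream'.cycle v hv₀) := by
    refine M.inLomega_of_invariant (fun x s => ∃ w, M.Run x w y ∧ s = w ++ₛ Stream'.cycle v hv₀)
      ?_ hx₀ ⟨u, hu, rfl⟩
    rintro x _ ⟨w, hw, rfl⟩
    obtain ⟨w, hw, hsw, hw₀⟩ : ∃ w', M.Run x w' y ∧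
        w ++ₛ Stream'.cycle v hv₀ = w' ++ₛ Stream'.cycle v hv₀ ∧ w' ≠ [] := by
      rcases w with _ | ⟨t, w⟩
      · exact ⟨v, (show x = y from hw) ▸ hv,
          by rw [Stream'.nil_append_stream]; exact Stream'.cycle_eq v hv₀, hv₀⟩
      · exact ⟨t :: w, hw, rfl, List.cons_ne_nil t w⟩
    rw [hsw]
    obtain ⟨t, w, rfl⟩ := List.exists_cons_of_ne_nil hw₀
    obtain ⟨z, hz, hzw⟩ := hw
    exact ⟨z, by simpa [Stream'.cons_append_stream] using hz, w, hzw,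
      by simp [Stream'.cons_append_stream]⟩
  obtain ⟨s'', -, hpre, hcard⟩ := hk _ hs u
    (isPrefixOf_iff.2 (by rw [Stream'.take_append_of_le_length _ _ _ le_rfl, List.take_length]))
  rw [isPrefixOf_iff, List.length_append, ← Stream'.append_take] at hpre
  rw [← List.append_cancel_left hpre] at hcard
  exact hest _ hcard

theorem not_spd_of_hasDivergentDetState [Finite X] (h : M.HasDivergentDetState) :
    ¬ M.SPD := by
  obtain ⟨q', ⟨w, hw⟩, hq', x, hx, x', s₁, s₂, hs₁, hs₂, hloop⟩ := h
  rw [unobsRun_iff] at hs₁ hloop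
  have hsub := M.subset_est_of_detRun hw
  obtain ⟨x₀, hx₀, e, rfl, he⟩ := hsub hx
  refine M.not_spd_of_lasso hx₀ (M.run_append.2 ⟨x, he, hs₁.1⟩) hloop.1 hs₂ fun n => ?_
  have hn : M.labelSeq ((Stream'.cycle s₂ hs₂).take n) = [] := by
    refine Stream'.take_cycle_induction hs₂ (P := fun u => M.labelSeq u = []) (fun m _ => ?_)
      (fun u hu => by rw [labelSeq_append, hloop.2, hu]; rfl) n
    exact List.prefix_nil.1 (hloop.2 ▸ (List.take_prefix m s₂).filterMap M.label)
  rw [labelSeq_append, labelSeq_append, hs₁.2, hn, List.append_nil, List.append_nil]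
  have := Set.ncard_le_ncard hsub
  omega

theorem not_spd_of_hasDetPairCycle [Finite X] (h : M.HasDetPairCycle) : ¬ M.SPD := by
  obtain ⟨n, hn, q, σ, ⟨w₀, hw₀⟩, hlast, htr, hq⟩ := h
  have hW := M.pairRun_ofFn q σ htr hq
  rw [← hlast] at hW
  obtain ⟨y, hy, p, hp₀, hp, hpW⟩ :=
    M.exists_loop_of_pairRun hW (by rw [Ne, List.ofFn_eq_nil_iff]; omega)
  obtain ⟨x₀, hx₀, e, rfl, he⟩ := M.subset_est_of_detRun hw₀ hy
  refine M.not_spd_of_lasso hx₀ he hp hp₀ fun m => ?_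
  obtain ⟨q', hq'⟩ := Stream'.take_cycle_induction hp₀
    (P := fun u => ∃ q', M.PairRun (q 0) (M.labelSeq u) q')
    (fun k _ => hpW.exists_of_prefix ((List.take_prefix k p).filterMap M.label))
    (fun u ⟨q', hu⟩ => ⟨q', by rw [labelSeq_append]; exact M.pairRun_append.2 ⟨q 0, hpW, hu⟩⟩) m
  have hsub := M.subset_est_of_detRun (M.detRun_append.2 ⟨q 0, hw₀, hq'.detRun⟩)
  rw [labelSeq_append]
  have := Set.ncard_le_ncard hsub
  rw [hq'.ncard_right] at this
  omega

theorem exists_run_of_not_spd [Finite X] (h : ¬ M.SPD) {k : ℕ} (hk : 0 < k) :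
    ∃ (s : Stream' T) (xs : ℕ → X) (n₀ : ℕ), xs 0 ∈ M.init ∧
      (∀ i, M.delta (xs i) (s.get i) (xs (i + 1))) ∧
      ∀ c, (M.labelSeq ((s.drop n₀).take c)).length < k →
        1 < (M.est (M.labelSeq (s.take (n₀ + c)))).ncard := by
  obtain ⟨s, ⟨xs, hx₀, hstep⟩, s', hs', H⟩ : ∃ s : Stream' T, M.InLomega s ∧
      ∃ s', IsPrefixOf s' s ∧ ∀ s'', (M.labelSeq s'').length < k →
        IsPrefixOf (s' ++ s'') s → (M.est (M.labelSeq (s' ++ s''))).ncard ≠ 1 := by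
    unfold SPD at h
    push Not at h
    exact h k hk
  refine ⟨s, xs, s'.length, hx₀, hstep, fun c hc => ?_⟩
  have hsplit : Stream'.take (s'.length + c) s = s' ++ (Stream'.drop s'.length s).take c := by
    rw [Stream'.take_add, isPrefixOf_iff.1 hs']
  have hne := H _ hc (by rw [← hsplit, isPrefixOf_iff, Stream'.length_take])
  rw [← hsplit] at hne
  have := (Set.ncard_pos).2 ⟨_, M.mem_est_take hx₀ hstep (s'.length + c)⟩
  omega

theorem exists_take_labelSeq_eq {s : Stream' T} {c : ℕ} {τ : List O}
    (h : τ <+: M.labelSeq (s.take c)) : ∃ c', M.labelSeq (s.take c') = τ := by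
  obtain ⟨r, hr⟩ := h
  obtain ⟨l₁, l₂, hl, hl₁, -⟩ := List.filterMap_eq_append_iff.1 hr.symm
  refine ⟨l₁.length, ?_⟩
  have hlen := congrArg List.length hl
  simp only [Stream'.length_take, List.length_append] at hlen
  have := congrArg (List.take l₁.length) hl
  rw [Stream'.take_take, min_eq_right (by omega), List.take_left' rfl] at this
  rw [this]
  exact hl₁

theorem exists_labelSeq_take_drop_eq_nil {s : Stream' T} {B : ℕ}
    (hB : ∀ c, (M.labelSeq (s.take c)).length < B) :
    ∃ c₀, ∀ d, M.labelSeq ((s.drop c₀).take d) = [] := by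
  set f := fun c => (M.labelSeq (s.take c)).length
  have hbdd : BddAbove (Set.range f) := ⟨B, by rintro _ ⟨c, rfl⟩; exact (hB c).le⟩
  obtain ⟨c₀, hc₀⟩ := Nat.sSup_mem (Set.range_nonempty f) hbdd
  refine ⟨c₀, fun d => List.eq_nil_of_length_eq_zero ?_⟩
  have hle : f (c₀ + d) ≤ f c₀ := hc₀ ▸ le_csSup hbdd ⟨_, rfl⟩
  simp only [f, Stream'.take_add, labelSeq_append, List.length_append] at hle
  omega

theorem exists_unobs_loop [Finite X] {s : Stream' T} {xs : ℕ → X}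
    (hstep : ∀ i, M.delta (xs i) (s.get i) (xs (i + 1))) {m : ℕ}
    (hm : ∀ d, M.labelSeq ((s.drop m).take d) = []) :
    ∃ (x' : X) (s₁ s₂ : List T), M.UnobsRun (xs m) s₁ x' ∧ s₂ ≠ [] ∧ M.UnobsRun x' s₂ x' := by
  obtain ⟨i, j, hij, heq⟩ := Finite.exists_ne_map_eq_of_infinite fun d => xs (m + d)
  wlog hlt : i < j generalizing i j
  · exact this j i hij.symm heq.symm (by omega)
  obtain ⟨d, rfl⟩ : ∃ d, j = i + (d + 1) := ⟨j - i - 1, by omega⟩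
  have hsplit := hm (i + (d + 1))
  rw [Stream'.take_add, Stream'.drop_drop, labelSeq_append, List.append_eq_nil_iff] at hsplit
  refine ⟨xs (m + i), _, _, M.unobsRun_iff.2 ⟨M.run_take_drop hstep m i, hsplit.1⟩, ?_,
    M.unobsRun_iff.2 ⟨?_, hsplit.2⟩⟩
  · rw [← List.length_pos_iff, Stream'.length_take]
    omega
  · have := M.run_take_drop hstep (m + i) (d + 1)
    rwa [add_assoc, ← heq] at this

theorem hasDivergentDetState_of_mem_est [Finite X] {σ : List O} {x x' : X} {s₁ s₂ : List T}
    (hσ : 1 < (M.est σ).ncard) (hx : x ∈ M.est σ) (hs₁ : M.UnobsRun x s₁ x') (hs₂ : s₂ ≠ [])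
    (hloop : M.UnobsRun x' s₂ x') : M.HasDivergentDetState := by
  obtain ⟨v, hv, hvx⟩ := Set.exists_ne_of_one_lt_ncard hσ x
  obtain ⟨q, hq, hxvq, -⟩ := M.exists_detReachable_of_subset_est (P := {x, v})
    (Set.insert_nonempty _ _) (Set.insert_subset hx (Set.singleton_subset_iff.2 hv))
    (Set.ncard_pair hvx.symm).le
  have hxq : x ∈ q := hxvq (Set.mem_insert x _)
  exact ⟨q, hq, (Set.one_lt_ncard_iff).2 ⟨x, v, hxq, hxvq (by simp), hvx.symm⟩,
    x, hxq, x', s₁, s₂, hs₁, hs₂, hloop⟩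

theorem hasDivergentDetState_or_hasDetPairCycle_of_not_spd [Finite X] (h : ¬ M.SPD) :
    M.HasDivergentDetState ∨ M.HasDetPairCycle := by
  set N := Nat.card (Set X)
  obtain ⟨s, xs, n₀, hx₀, hstep, hest⟩ := M.exists_run_of_not_spd h (k := N + 3) (by omega)
  by_cases hB : ∀ c, (M.labelSeq ((s.drop n₀).take c)).length < N + 2
  · left
    obtain ⟨c₀, hc₀⟩ := M.exists_labelSeq_take_drop_eq_nil hB
    simp only [Stream'.drop_drop] at hc₀
    obtain ⟨x', s₁, s₂, hs₁, hs₂, hloop⟩ := M.exists_unobs_loop hstep hc₀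
    exact M.hasDivergentDetState_of_mem_est (hest c₀ (by have := hB c₀; omega))
      (M.mem_est_take hx₀ hstep _) hs₁ hs₂ hloop
  · right
    push Not at hB
    obtain ⟨c, hc⟩ := hB
    set τ := M.labelSeq ((s.drop n₀).take c)
    obtain ⟨a, w, haw⟩ := List.exists_cons_of_length_eq_add_one (n := N + 1) (l := τ.take (N + 2))
      (by simp only [List.length_take]; omega)
    have hw : w.length = N + 1 := by
      have := congrArg List.length haw
      simp only [List.length_take, List.length_cons] at this
      omega
    refine M.hasDetPairCycle_of_one_lt_ncard_est (σ := M.labelSeq (s.take n₀)) (a := a)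
      (w := w) (by omega) fun j hj => ?_
    have : a :: w.take j <+: τ :=
      ((List.prefix_cons_inj a).2 (List.take_prefix j w)).trans (haw ▸ List.take_prefix _ τ)
    obtain ⟨c', hc'⟩ := M.exists_take_labelSeq_eq this
    have := hest c' (by rw [hc', List.length_cons, List.length_take]; omega)
    rwa [Stream'.take_add, labelSeq_append, hc', ← List.singleton_append,
      ← List.append_assoc] at this

end FSA

theorem not_spd_iff_detector_general {X T O : Type} [Fintype X]
    (M : FSA X T O) :
    ¬ M.SPD ↔
      ((∃ q' : Set X, M.DetReachable q' ∧ 1 < q'.ncard ∧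
          ∃ x ∈ q', ∃ (x' : X) (s1 s2 : List T),
            M.UnobsRun x s1 x' ∧ s2 ≠ [] ∧ M.UnobsRun x' s2 x') ∨
       (∃ (n : ℕ), 0 < n ∧ ∃ (q : Fin (n + 1) → Set X) (σ : Fin n → O),
          M.DetReachable (q 0) ∧ q 0 = q (Fin.last n) ∧
          (∀ i : Fin n, M.detTrans (q i.castSucc) (σ i) (q i.succ)) ∧
          ∀ i : Fin (n + 1), (q i).ncard = 2)) :=
  ⟨M.hasDivergentDetState_or_hasDetPairCycle_of_not_spd,
    fun h => h.elim M.not_spd_of_hasDivergentDetState M.not_spd_of_hasDetPairCycle⟩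

/-- `S` is not SPD iff in its detector `S_det`: (5) there are a reachable
state `q'` and `x ∈ q'` with `|q'| > 1` and a transition sequence `x →^{s1} x' →^{s2} x'`
in `S` with `s1 ∈ (T_uo)*`, `s2 ∈ (T_uo)^+`; or (6) there is a reachable transition
cycle of `S_det` all of whose states have cardinality 2. -/
theorem not_spd_iff_detector {X T O : Type} [Fintype X] [Fintype T] [Fintype O]
    (M : FSA X T O) :
    ¬ M.SPD ↔
      ((∃ q' : Set X, M.DetReachable q' ∧ 1 < q'.ncard ∧
          ∃ x ∈ q', ∃ (x' : X) (s1 s2 : List T),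
            M.UnobsRun x s1 x' ∧ s2 ≠ [] ∧ M.UnobsRun x' s2 x') ∨
       (∃ (n : ℕ), 0 < n ∧ ∃ (q : Fin (n + 1) → Set X) (σ : Fin n → O),
          M.DetReachable (q 0) ∧ q 0 = q (Fin.last n) ∧
          (∀ i : Fin n, M.detTrans (q i.castSucc) (σ i) (q i.succ)) ∧
          ∀ i : Fin (n + 1), (q i).ncard = 2)) :=
  not_spd_iff_detector_general M
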